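/- arXiv:gr-qc/0408095 — 2 statements merged into one kernel-verified Lean document; each statement's English description precedes it below -/
import Mathlib

section
/- If X, N ∈ ℝ^{1+n} are both causal and future-directed (η(X,X) ≥ 0, X^0 > 0, η(N,N) ≥ 0, N^0 > 0), then the quadratic form γ(ξ,ξ) = −η(X,N) η(ξ,ξ) + 2 η(X,ξ) η(N,ξ) is positive semidefinite: γ(ξ,ξ) ≥ 0 for every ξ ∈ ℝ^{1+n}. -/
noncomputable section

open MeasureTheory
open scoped BigOperators

/-- Flat spacetime `ℝ^{1+n}`, with coordinate `0` the time coordinate. -/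
abbrev Spacetime (n : ℕ) := Fin (n + 1) → ℝ

/-- The diagonal of the Minkowski metric `η = diag(1, -1, …, -1)`. -/
def mdiag {n : ℕ} (α : Fin (n + 1)) : ℝ := if α = 0 then 1 else -1

/-- The (inverse) Minkowski metric `η^{αβ}` (its matrix equals that of `η_{αβ}`). -/
def metricUp {n : ℕ} (α β : Fin (n + 1)) : ℝ := if α = β then mdiag α else 0

/-- The Minkowski bilinear form `η(u,v) = u⁰v⁰ - ∑ᵢ uⁱvⁱ`. -/
def minkBil {n : ℕ} (u v : Fin (n + 1) → ℝ) : ℝ := ∑ α, mdiag α * u α * v α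

/-- Partial derivative `∂_α f` on flat spacetime. -/
def pd {n : ℕ} (α : Fin (n + 1)) (f : Spacetime n → ℝ) (x : Spacetime n) : ℝ :=
  fderiv ℝ f x (Pi.single α 1)

/-- The stress tensor `T^{αβ}(φ) = ∂^αφ ∂^βφ - (1/2) η^{αβ}(∂^λφ ∂_λφ - 2V(φ))`
of a scalar field `φ` with potential `V`. -/
def Tphi {n : ℕ} (φ : Spacetime n → ℝ) (V : ℝ → ℝ) (α β : Fin (n + 1))
    (x : Spacetime n) : ℝ :=
  (mdiag α * pd α φ x) * (mdiag β * pd β φ x)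
    - (1 / 2) * metricUp α β *
        ((∑ lam, mdiag lam * pd lam φ x * pd lam φ x) - 2 * V (φ x))

/-- The wave operator `□φ = η^{αβ} ∂_α ∂_β φ`. -/
def box {n : ℕ} (φ : Spacetime n → ℝ) (x : Spacetime n) : ℝ :=
  ∑ α, mdiag α * pd α (pd α φ) x

/-!
Write `R_ξ X = 2 η(X,ξ) ξ - η(ξ,ξ) X`. Then `γ(ξ,ξ) = η(R_ξ X, N)`, and `R_ξ X` is causal because
`η(R_ξ X, R_ξ X) = η(ξ,ξ)² η(X,X)`. It is also future-directed: its time component is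
`η(R_ξ X, e₀) = η(X, R_ξ e₀)`, and `R_ξ e₀` is causal with time component `|ξ|²_Euclid ≥ 0`.
So `γ(ξ,ξ) ≥ 0` by the reverse Cauchy–Schwarz inequality for future causal vectors, used twice.
-/

lemma minkBil_eq {n : ℕ} (u v : Fin (n + 1) → ℝ) :
    minkBil u v = u 0 * v 0 - ∑ i : Fin n, u i.succ * v i.succ := by
  simp [minkBil, Fin.sum_univ_succ, mdiag, Fin.succ_ne_zero, sub_eq_add_neg]

lemma minkBil_comm {n : ℕ} (u v : Fin (n + 1) → ℝ) : minkBil u v = minkBil v u := by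
  simp only [minkBil, mul_right_comm]

lemma minkBil_sub_left {n : ℕ} (u v w : Fin (n + 1) → ℝ) :
    minkBil (u - v) w = minkBil u w - minkBil v w := by
  simp only [minkBil, ← Finset.sum_sub_distrib, Pi.sub_apply]
  exact Finset.sum_congr rfl fun _ _ => by ring

lemma minkBil_smul_left {n : ℕ} (c : ℝ) (u v : Fin (n + 1) → ℝ) :
    minkBil (c • u) v = c * minkBil u v := by
  simp only [minkBil, Finset.mul_sum, Pi.smul_apply, smul_eq_mul]
  exact Finset.sum_congr rfl fun _ _ => by ring

lemma minkBil_single_zero_right {n : ℕ} (u : Fin (n + 1) → ℝ) :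
    minkBil u (Pi.single 0 1) = u 0 := by
  simp [minkBil, Pi.single_apply, mdiag]

theorem minkBil_nonneg_of_causal {n : ℕ} {u v : Fin (n + 1) → ℝ}
    (hu : 0 ≤ minkBil u u) (hu0 : 0 ≤ u 0) (hv : 0 ≤ minkBil v v) (hv0 : 0 ≤ v 0) :
    0 ≤ minkBil u v := by
  rw [minkBil_eq] at hu hv ⊢
  have hcs := Finset.sum_mul_sq_le_sq_mul_sq Finset.univ (fun i : Fin n => u i.succ)
    (fun i => v i.succ)
  simp only [← sq] at hu hv hcs
  have hsq : (∑ i : Fin n, u i.succ * v i.succ) ^ 2 ≤ (u 0 * v 0) ^ 2 := by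
    rw [mul_pow]
    exact hcs.trans (mul_le_mul (by linarith) (by linarith)
      (Finset.sum_nonneg fun _ _ => sq_nonneg _) (sq_nonneg _))
  linarith [(abs_le_of_sq_le_sq' hsq (mul_nonneg hu0 hv0)).2]

/-- `-η(ξ,ξ)` times the reflection of `X` in the hyperplane `η(ξ, ·) = 0`; the rescaling makes it
defined also for null `ξ`. -/
def minkReflect {n : ℕ} (ξ X : Fin (n + 1) → ℝ) : Fin (n + 1) → ℝ :=
  (2 * minkBil X ξ) • ξ - minkBil ξ ξ • X

lemma minkBil_minkReflect_left {n : ℕ} (ξ X Y : Fin (n + 1) → ℝ) :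
    minkBil (minkReflect ξ X) Y = 2 * minkBil X ξ * minkBil Y ξ - minkBil ξ ξ * minkBil X Y := by
  rw [minkReflect, minkBil_sub_left, minkBil_smul_left, minkBil_smul_left, minkBil_comm ξ Y,
    mul_assoc]

lemma minkBil_minkReflect_comm {n : ℕ} (ξ X Y : Fin (n + 1) → ℝ) :
    minkBil (minkReflect ξ X) Y = minkBil X (minkReflect ξ Y) := by
  rw [minkBil_comm X, minkBil_minkReflect_left, minkBil_minkReflect_left, minkBil_comm X Y]
  ring

lemma minkBil_minkReflect_self {n : ℕ} (ξ X : Fin (n + 1) → ℝ) :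
    minkBil (minkReflect ξ X) (minkReflect ξ X) = minkBil ξ ξ ^ 2 * minkBil X X := by
  rw [minkBil_minkReflect_left, minkBil_minkReflect_left ξ X ξ,
    minkBil_comm X (minkReflect ξ X), minkBil_minkReflect_left]
  ring

lemma minkReflect_single_zero_apply_zero_nonneg {n : ℕ} (ξ : Fin (n + 1) → ℝ) :
    0 ≤ minkReflect ξ (Pi.single 0 1) 0 := by
  have hξ := minkBil_eq ξ ξ
  simp only [minkReflect, Pi.sub_apply, Pi.smul_apply, smul_eq_mul, Pi.single_eq_same,
    minkBil_comm _ ξ, minkBil_single_zero_right]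
  nlinarith [Finset.sum_nonneg fun (i : Fin n) (_ : i ∈ Finset.univ) => mul_self_nonneg (ξ i.succ),
    mul_self_nonneg (ξ 0)]

lemma minkReflect_apply_zero_nonneg {n : ℕ} (ξ : Fin (n + 1) → ℝ) {X : Fin (n + 1) → ℝ}
    (hX : 0 ≤ minkBil X X) (hX0 : 0 ≤ X 0) : 0 ≤ minkReflect ξ X 0 := by
  rw [← minkBil_single_zero_right (minkReflect ξ X), minkBil_minkReflect_comm]
  refine minkBil_nonneg_of_causal hX hX0 ?_ (minkReflect_single_zero_apply_zero_nonneg ξ)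
  rw [minkBil_minkReflect_self]
  exact mul_nonneg (sq_nonneg _) (by simp [minkBil_single_zero_right])

theorem quadratic_form_nonneg_general (n : ℕ)
    (X N : Fin (n + 1) → ℝ)
    (hX : 0 ≤ minkBil X X) (hX0 : 0 < X 0)
    (hN : 0 ≤ minkBil N N) (hN0 : 0 < N 0) :
    ∀ ξ : Fin (n + 1) → ℝ,
      0 ≤ -(minkBil X N) * minkBil ξ ξ + 2 * minkBil X ξ * minkBil N ξ := by
  intro ξ
  have hγ : -(minkBil X N) * minkBil ξ ξ + 2 * minkBil X ξ * minkBil N ξ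
      = minkBil (minkReflect ξ X) N := by
    rw [minkBil_minkReflect_left]; ring
  have hR : 0 ≤ minkBil (minkReflect ξ X) (minkReflect ξ X) := by
    rw [minkBil_minkReflect_self]; positivity
  rw [hγ]
  exact minkBil_nonneg_of_causal hR (minkReflect_apply_zero_nonneg ξ hX hX0.le) hN hN0.le

/-- for `X, N` causal and future-directed, the quadratic form
`γ(ξ,ξ) = -η(X,N) η(ξ,ξ) + 2 η(X,ξ) η(N,ξ)` is positive semidefinite. -/
theorem quadratic_form_nonneg (n : ℕ) (hn : 1 ≤ n)
    (X N : Fin (n + 1) → ℝ)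
    (hX : 0 ≤ minkBil X X) (hX0 : 0 < X 0)
    (hN : 0 ≤ minkBil N N) (hN0 : 0 < N 0) :
    ∀ ξ : Fin (n + 1) → ℝ,
      0 ≤ -(minkBil X N) * minkBil ξ ξ + 2 * minkBil X ξ * minkBil N ξ :=
  quadratic_form_nonneg_general n X N hX hX0 hN hN0
end
end

section
/- (Theorem 3.2, flat-spacetime form.) Let φ : ℝ^{1+n} → ℝ be twice continuously differentiable with continuously differentiable potential V : ℝ → ℝ, let ρ, p : ℝ^{1+n} → ℝ and the vector field V^α be continuously differentiable with η(V,V) = 1 at every point, and let T_fluid^{αβ} = (ρ + p)V^αV^β − p η^{αβ}. Assume total conservation ∂_α(T^{αβ}(φ) + T_fluid^{αβ}) = 0 for all β, let t₀ ≤ t₁, and suppose there is a compact set K ⊆ ℝⁿ such that T^{αβ}(φ)(t,x), ρ(t,x) and p(t,x) all vanish for t ∈ [t₀,t₁] and x ∉ K. Define E_t(φ) = ∫_{ℝⁿ} V_α T^{α0}(φ)(t,x) dx and E_t(fluid) = ∫_{ℝⁿ} (ρ V^0)(t,x) dx. Then the total slice energy depends on the integrated pressure: E_{t₁}(φ) +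 E_{t₁}(fluid) = E_{t₀}(φ) + E_{t₀}(fluid) + (1/2) ∫_{t₀}^{t₁} ∫_{ℝⁿ} T^{αβ}(φ)(∂_α V_β + ∂_β V_α) dx dt − ∫_{t₀}^{t₁} ∫_{ℝⁿ} p ∂_α V^α dx dt. -/
noncomputable section

open MeasureTheory
open scoped BigOperators

namespace EnergyAux

variable {n : ℕ}

lemma mdiag_sq (α : Fin (n + 1)) : mdiag α * mdiag α = 1 := by
  unfold mdiag; split <;> norm_num

lemma metricUp_symm (α β : Fin (n + 1)) : metricUp α β = metricUp β α := by
  unfold metricUp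
  by_cases h : α = β
  · subst h; simp
  · rw [if_neg h, if_neg (Ne.symm h)]

lemma Tphi_symm (φ : Spacetime n → ℝ) (V : ℝ → ℝ) (α β : Fin (n + 1)) (x : Spacetime n) :
    Tphi φ V α β x = Tphi φ V β α x := by
  unfold Tphi; rw [metricUp_symm]; ring

lemma contDiff_pd {f : Spacetime n → ℝ} (hf : ContDiff ℝ 2 f) (α : Fin (n + 1)) :
    ContDiff ℝ 1 (pd α f) := by
  have h := hf.fderiv_right (m := 1) (by norm_num)
  exact h.clm_apply contDiff_const

lemma pd_const (α : Fin (n + 1)) (c : ℝ) (x : Spacetime n) :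
    pd α (fun _ => c) x = 0 := by
  unfold pd; rw [fderiv_fun_const]; simp

lemma pd_add {f g : Spacetime n → ℝ} {x : Spacetime n}
    (hf : DifferentiableAt ℝ f x) (hg : DifferentiableAt ℝ g x) (α : Fin (n + 1)) :
    pd α (fun y => f y + g y) x = pd α f x + pd α g x := by
  unfold pd; rw [fderiv_fun_add hf hg]; simp

lemma pd_mul {f g : Spacetime n → ℝ} {x : Spacetime n}
    (hf : DifferentiableAt ℝ f x) (hg : DifferentiableAt ℝ g x) (α : Fin (n + 1)) :
    pd α (fun y => f y * g y) x = pd α f x * g x + f x * pd α g x := by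
  unfold pd; rw [fderiv_fun_mul hf hg]; simp; ring

lemma pd_const_mul {f : Spacetime n → ℝ} {x : Spacetime n}
    (hf : DifferentiableAt ℝ f x) (c : ℝ) (α : Fin (n + 1)) :
    pd α (fun y => c * f y) x = c * pd α f x := by
  unfold pd; rw [fderiv_const_mul hf]; simp

lemma pd_sum {ι : Type*} (s : Finset ι) {F : ι → Spacetime n → ℝ} {x : Spacetime n}
    (hF : ∀ i ∈ s, DifferentiableAt ℝ (F i) x) (α : Fin (n + 1)) :
    pd α (fun y => ∑ i ∈ s, F i y) x = ∑ i ∈ s, pd α (F i) x := by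
  unfold pd; rw [fderiv_fun_sum hF]; simp

end EnergyAux

section S2
namespace EnergyAux

variable {n : ℕ} (φ : Spacetime n → ℝ) (V : ℝ → ℝ) (ρ p : Spacetime n → ℝ)
  (Vf : Fin (n + 1) → Spacetime n → ℝ)

/-- total stress tensor -/
def Stot (α β : Fin (n + 1)) (x : Spacetime n) : ℝ :=
  Tphi φ V α β x + ((ρ x + p x) * Vf α x * Vf β x - p x * metricUp α β)

/-- energy-momentum current -/
def Pvec (γ : Fin (n + 1)) (x : Spacetime n) : ℝ :=
  ∑ β, (mdiag β * Vf β x) * Stot φ V ρ p Vf γ β x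

variable {φ V ρ p Vf}

lemma contDiff_Tphi (hφ : ContDiff ℝ 2 φ) (hV : ContDiff ℝ 1 V) (α β : Fin (n + 1)) :
    ContDiff ℝ 1 (fun x => Tphi φ V α β x) := by
  have hpd : ∀ γ : Fin (n + 1), ContDiff ℝ 1 (pd γ φ) := contDiff_pd hφ
  unfold Tphi
  exact ((contDiff_const.mul (hpd α)).mul (contDiff_const.mul (hpd β))).sub
    (((contDiff_const.mul contDiff_const)).mul
      ((ContDiff.sum fun lam _ => (contDiff_const.mul (hpd lam)).mul (hpd lam)).sub
        (contDiff_const.mul (hV.comp (hφ.of_le one_le_two)))))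

lemma contDiff_Stot (hφ : ContDiff ℝ 2 φ) (hV : ContDiff ℝ 1 V)
    (hρ : ContDiff ℝ 1 ρ) (hp : ContDiff ℝ 1 p) (hVf : ∀ α, ContDiff ℝ 1 (Vf α))
    (α β : Fin (n + 1)) : ContDiff ℝ 1 (fun x => Stot φ V ρ p Vf α β x) := by
  unfold Stot
  exact (contDiff_Tphi hφ hV α β).add
    ((((hρ.add hp).mul (hVf α)).mul (hVf β)).sub (hp.mul contDiff_const))

lemma contDiff_Pvec (hφ : ContDiff ℝ 2 φ) (hV : ContDiff ℝ 1 V)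
    (hρ : ContDiff ℝ 1 ρ) (hp : ContDiff ℝ 1 p) (hVf : ∀ α, ContDiff ℝ 1 (Vf α))
    (γ : Fin (n + 1)) : ContDiff ℝ 1 (fun x => Pvec φ V ρ p Vf γ x) := by
  unfold Pvec
  exact ContDiff.sum fun β _ =>
    (contDiff_const.mul (hVf β)).mul (contDiff_Stot hφ hV hρ hp hVf γ β)

lemma continuous_pd {f : Spacetime n → ℝ} (hf : ContDiff ℝ 1 f) (γ : Fin (n + 1)) :
    Continuous (pd γ f) :=
  (hf.continuous_fderiv one_ne_zero).clm_apply continuous_const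

end EnergyAux
end S2

section S3
namespace EnergyAux

variable {n : ℕ} {φ : Spacetime n → ℝ} {V : ℝ → ℝ} {ρ p : Spacetime n → ℝ}
  {Vf : Fin (n + 1) → Spacetime n → ℝ}

lemma claim1 (hVf : ∀ α, ContDiff ℝ 1 (Vf α))
    (hunit : ∀ x : Spacetime n, ∑ α, mdiag α * Vf α x * Vf α x = 1)
    (γ : Fin (n + 1)) (x : Spacetime n) :
    ∑ β, Vf β x * (mdiag β * pd γ (Vf β) x) = 0 := by
  have hdVf : ∀ β, DifferentiableAt ℝ (Vf β) x :=
    fun β => ((hVf β).differentiable one_ne_zero).differentiableAt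
  have hdc : ∀ β : Fin (n + 1), DifferentiableAt ℝ (fun y => mdiag β * Vf β y) x :=
    fun β => ((contDiff_const.mul (hVf β)).differentiable one_ne_zero).differentiableAt
  have h0 : pd γ (fun y => ∑ β, mdiag β * Vf β y * Vf β y) x = 0 := by
    have : (fun y : Spacetime n => ∑ β, mdiag β * Vf β y * Vf β y) = fun _ => (1 : ℝ) :=
      funext fun y => hunit y
    rw [this, pd_const]
  have h1 : pd γ (fun y => ∑ β, mdiag β * Vf β y * Vf β y) x
      = ∑ β, (2 * (Vf β x * (mdiag β * pd γ (Vf β) x))) := by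
    rw [pd_sum (F := fun β y => mdiag β * Vf β y * Vf β y) _ (fun β _ => (hdc β).mul (hdVf β))]
    refine Finset.sum_congr rfl fun β _ => ?_
    rw [pd_mul (f := fun y => mdiag β * Vf β y) (g := Vf β) (hdc β) (hdVf β),
      pd_const_mul (hdVf β)]
    ring
  rw [h1, ← Finset.mul_sum] at h0
  linarith

lemma div_Pvec (hφ : ContDiff ℝ 2 φ) (hV : ContDiff ℝ 1 V)
    (hρ : ContDiff ℝ 1 ρ) (hp : ContDiff ℝ 1 p) (hVf : ∀ α, ContDiff ℝ 1 (Vf α))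
    (hunit : ∀ x : Spacetime n, ∑ α, mdiag α * Vf α x * Vf α x = 1)
    (hcons : ∀ β (x : Spacetime n),
      ∑ α, pd α (fun y => Tphi φ V α β y
        + ((ρ y + p y) * Vf α y * Vf β y - p y * metricUp α β)) x = 0)
    (x : Spacetime n) :
    ∑ γ, pd γ (fun y => Pvec φ V ρ p Vf γ y) x
      = (1 / 2) * (∑ α, ∑ β, Tphi φ V α β x *
            (pd α (fun y => mdiag β * Vf β y) x + pd β (fun y => mdiag α * Vf α y) x))
        - p x * ∑ α, pd α (Vf α) x := by
  have hdVf : ∀ β, DifferentiableAt ℝ (Vf β) x :=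
    fun β => ((hVf β).differentiable one_ne_zero).differentiableAt
  have hdc : ∀ β : Fin (n + 1), DifferentiableAt ℝ (fun y => mdiag β * Vf β y) x :=
    fun β => ((contDiff_const.mul (hVf β)).differentiable one_ne_zero).differentiableAt
  have hdS : ∀ γ β : Fin (n + 1), DifferentiableAt ℝ (fun y => Stot φ V ρ p Vf γ β y) x :=
    fun γ β => ((contDiff_Stot hφ hV hρ hp hVf γ β).differentiable one_ne_zero).differentiableAt
  have hpdc : ∀ γ β : Fin (n + 1),
      pd γ (fun y => mdiag β * Vf β y) x = mdiag β * pd γ (Vf β) x :=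
    fun γ β => pd_const_mul (hdVf β) _ _
  -- step 1 : expand the divergence
  have step1 : ∀ γ, pd γ (fun y => Pvec φ V ρ p Vf γ y) x
      = ∑ β, (mdiag β * pd γ (Vf β) x * Stot φ V ρ p Vf γ β x
          + mdiag β * Vf β x * pd γ (fun y => Stot φ V ρ p Vf γ β y) x) := by
    intro γ
    have e1 : (fun y => Pvec φ V ρ p Vf γ y)
        = fun y => ∑ β, (fun y' => mdiag β * Vf β y') y * Stot φ V ρ p Vf γ β y := rfl
    rw [e1, pd_sum (F := fun β y => (fun y' => mdiag β * Vf β y') y * Stot φ V ρ p Vf γ β y) _ (fun β _ => (hdc β).mul (hdS γ β))]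
    refine Finset.sum_congr rfl fun β _ => ?_
    rw [pd_mul (f := fun y => mdiag β * Vf β y) (g := fun y => Stot φ V ρ p Vf γ β y)
      (hdc β) (hdS γ β), hpdc]
  -- step 2: the conservation part vanishes
  have step2 : ∑ γ, ∑ β, mdiag β * Vf β x * pd γ (fun y => Stot φ V ρ p Vf γ β y) x = 0 := by
    rw [Finset.sum_comm]
    refine Finset.sum_eq_zero fun β _ => ?_
    have : ∑ γ, pd γ (fun y => Stot φ V ρ p Vf γ β y) x = 0 := by
      simpa only [Stot] using hcons β x
    calc ∑ γ, mdiag β * Vf β x * pd γ (fun y => Stot φ V ρ p Vf γ β y) x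
        = mdiag β * Vf β x * ∑ γ, pd γ (fun y => Stot φ V ρ p Vf γ β y) x := by
          rw [Finset.mul_sum]
      _ = 0 := by rw [this, mul_zero]
  -- split Stot into Tphi and fluid parts
  have step3 : ∑ γ, ∑ β, mdiag β * pd γ (Vf β) x * Stot φ V ρ p Vf γ β x
      = (∑ γ, ∑ β, mdiag β * pd γ (Vf β) x * Tphi φ V γ β x)
        + ∑ γ, ∑ β, mdiag β * pd γ (Vf β) x *
            ((ρ x + p x) * Vf γ x * Vf β x - p x * metricUp γ β) := by
    rw [← Finset.sum_add_distrib]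
    refine Finset.sum_congr rfl fun γ _ => ?_
    rw [← Finset.sum_add_distrib]
    refine Finset.sum_congr rfl fun β _ => ?_
    simp only [Stot]; ring
  -- fluid part
  have step5 : ∑ γ, ∑ β, mdiag β * pd γ (Vf β) x *
      ((ρ x + p x) * Vf γ x * Vf β x - p x * metricUp γ β)
      = - (p x * ∑ α, pd α (Vf α) x) := by
    have inner : ∀ γ, ∑ β, mdiag β * pd γ (Vf β) x *
        ((ρ x + p x) * Vf γ x * Vf β x - p x * metricUp γ β)
        = - (p x * pd γ (Vf γ) x) := by
      intro γ
      have e : ∀ β, mdiag β * pd γ (Vf β) x *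
          ((ρ x + p x) * Vf γ x * Vf β x - p x * metricUp γ β)
          = (ρ x + p x) * Vf γ x * (Vf β x * (mdiag β * pd γ (Vf β) x))
            - p x * (mdiag β * pd γ (Vf β) x * metricUp γ β) := fun β => by ring
      rw [Finset.sum_congr rfl fun β _ => e β, Finset.sum_sub_distrib, ← Finset.mul_sum,
        ← Finset.mul_sum, claim1 hVf hunit γ x, mul_zero, zero_sub]
      have e2 : ∑ β, mdiag β * pd γ (Vf β) x * metricUp γ β = pd γ (Vf γ) x := by
        rw [Finset.sum_eq_single γ]
        · have : metricUp γ γ = mdiag γ := by unfold metricUp; simp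
          rw [this]
          calc mdiag γ * pd γ (Vf γ) x * mdiag γ
              = mdiag γ * mdiag γ * pd γ (Vf γ) x := by ring
            _ = pd γ (Vf γ) x := by rw [mdiag_sq]; ring
        · intro β _ hβ
          have : metricUp γ β = 0 := by unfold metricUp; rw [if_neg (Ne.symm hβ)]
          rw [this, mul_zero]
        · intro h; exact absurd (Finset.mem_univ γ) h
      rw [e2]
    rw [Finset.sum_congr rfl fun γ _ => inner γ]
    calc ∑ γ : Fin (n + 1), -(p x * pd γ (Vf γ) x)
        = ∑ γ : Fin (n + 1), (-(p x)) * pd γ (Vf γ) x :=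
          Finset.sum_congr rfl fun γ _ => by ring
      _ = (-(p x)) * ∑ γ, pd γ (Vf γ) x := by rw [Finset.mul_sum]
      _ = -(p x * ∑ α, pd α (Vf α) x) := by ring
  -- T part
  have step4 : ∑ γ, ∑ β, mdiag β * pd γ (Vf β) x * Tphi φ V γ β x
      = (1 / 2) * (∑ α, ∑ β, Tphi φ V α β x *
          (pd α (fun y => mdiag β * Vf β y) x + pd β (fun y => mdiag α * Vf α y) x)) := by
    have hsym : ∑ α, ∑ β, Tphi φ V α β x * (mdiag α * pd β (Vf α) x)
        = ∑ α, ∑ β, Tphi φ V α β x * (mdiag β * pd α (Vf β) x) := by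
      rw [Finset.sum_comm]
      exact Finset.sum_congr rfl fun α _ => Finset.sum_congr rfl fun β _ => by
        rw [Tphi_symm]
    have expand : ∑ α, ∑ β, Tphi φ V α β x *
        (pd α (fun y => mdiag β * Vf β y) x + pd β (fun y => mdiag α * Vf α y) x)
        = (∑ α, ∑ β, Tphi φ V α β x * (mdiag β * pd α (Vf β) x))
          + ∑ α, ∑ β, Tphi φ V α β x * (mdiag α * pd β (Vf α) x) := by
      rw [← Finset.sum_add_distrib]
      refine Finset.sum_congr rfl fun α _ => ?_
      rw [← Finset.sum_add_distrib]
      refine Finset.sum_congr rfl fun β _ => ?_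
      rw [hpdc, hpdc]; ring
    rw [expand, hsym]
    rw [Finset.sum_congr rfl fun γ _ => Finset.sum_congr rfl fun β _ =>
      (by ring : mdiag β * pd γ (Vf β) x * Tphi φ V γ β x
        = Tphi φ V γ β x * (mdiag β * pd γ (Vf β) x))]
    ring
  calc ∑ γ, pd γ (fun y => Pvec φ V ρ p Vf γ y) x
      = ∑ γ, ∑ β, (mdiag β * pd γ (Vf β) x * Stot φ V ρ p Vf γ β x
          + mdiag β * Vf β x * pd γ (fun y => Stot φ V ρ p Vf γ β y) x) :=
        Finset.sum_congr rfl fun γ _ => step1 γ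
    _ = (∑ γ, ∑ β, mdiag β * pd γ (Vf β) x * Stot φ V ρ p Vf γ β x)
          + ∑ γ, ∑ β, mdiag β * Vf β x * pd γ (fun y => Stot φ V ρ p Vf γ β y) x := by
        rw [← Finset.sum_add_distrib]
        exact Finset.sum_congr rfl fun γ _ => by rw [← Finset.sum_add_distrib]
    _ = (1 / 2) * (∑ α, ∑ β, Tphi φ V α β x *
            (pd α (fun y => mdiag β * Vf β y) x + pd β (fun y => mdiag α * Vf α y) x))
        - p x * ∑ α, pd α (Vf α) x := by
        rw [step2, add_zero, step3, step4, step5]; ring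

end EnergyAux
end S3

section S4
namespace EnergyAux

open Set

variable {n : ℕ} {φ : Spacetime n → ℝ} {V : ℝ → ℝ} {ρ p : Spacetime n → ℝ}
  {Vf : Fin (n + 1) → Spacetime n → ℝ}

lemma Pvec_zero (hunit : ∀ x : Spacetime n, ∑ α, mdiag α * Vf α x * Vf α x = 1)
    (y : Spacetime n) :
    Pvec φ V ρ p Vf 0 y = (∑ α, (mdiag α * Vf α y) * Tphi φ V α 0 y) + ρ y * Vf 0 y := by
  unfold Pvec Stot
  have e0 : ∑ β, mdiag β * Vf β y * metricUp 0 β = Vf 0 y := by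
    rw [Finset.sum_eq_single (0 : Fin (n + 1))]
    · have h1 : metricUp (0 : Fin (n + 1)) 0 = 1 := by unfold metricUp mdiag; simp
      have h2 : mdiag (0 : Fin (n + 1)) = 1 := by unfold mdiag; simp
      rw [h1, h2]; ring
    · intro β _ hβ
      have : metricUp (0 : Fin (n + 1)) β = 0 := by
        unfold metricUp; rw [if_neg (Ne.symm hβ)]
      rw [this, mul_zero]
    · intro h; exact absurd (Finset.mem_univ _) h
  calc ∑ β, mdiag β * Vf β y *
        (Tphi φ V 0 β y + ((ρ y + p y) * Vf 0 y * Vf β y - p y * metricUp 0 β))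
      = ∑ β, (mdiag β * Vf β y * Tphi φ V β 0 y
          + ((ρ y + p y) * Vf 0 y * (mdiag β * Vf β y * Vf β y)
             - p y * (mdiag β * Vf β y * metricUp 0 β))) := by
        refine Finset.sum_congr rfl fun β _ => ?_
        rw [Tphi_symm φ V 0 β]; ring
    _ = (∑ β, mdiag β * Vf β y * Tphi φ V β 0 y)
          + ((ρ y + p y) * Vf 0 y * (∑ β, mdiag β * Vf β y * Vf β y)
             - p y * ∑ β, mdiag β * Vf β y * metricUp 0 β) := by
        rw [Finset.sum_add_distrib, Finset.sum_sub_distrib, ← Finset.mul_sum, ← Finset.mul_sum]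
    _ = (∑ α, (mdiag α * Vf α y) * Tphi φ V α 0 y) + ρ y * Vf 0 y := by
        rw [hunit y, e0]
        rw [Finset.sum_congr rfl fun β _ => (by ring : mdiag β * Vf β y * Tphi φ V β 0 y
          = (mdiag β * Vf β y) * Tphi φ V β 0 y)]
        ring

lemma Pvec_vanish {z : Spacetime n} (h1 : ∀ α β, Tphi φ V α β z = 0)
    (h2 : ρ z = 0) (h3 : p z = 0) (γ : Fin (n + 1)) : Pvec φ V ρ p Vf γ z = 0 := by
  unfold Pvec Stot
  refine Finset.sum_eq_zero fun β _ => ?_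
  rw [h1, h2, h3]; ring

lemma continuous_cons : Continuous (fun z : ℝ × (Fin n → ℝ) => (Fin.cons z.1 z.2 : Spacetime n)) := by
  apply continuous_pi
  intro i
  refine Fin.cases ?_ ?_ i
  · simpa using continuous_fst
  · intro j
    simp only [Fin.cons_succ]; exact (continuous_apply j).comp continuous_snd

/-- Fubini for a continuous function on a slab box. -/
lemma slab_integral (t₀ t₁ : ℝ) (a' b' : Fin n → ℝ)
    (g : Spacetime n → ℝ) (hg : Continuous g) :
    ∫ x in Set.Icc (Fin.cons t₀ a' : Spacetime n) (Fin.cons t₁ b'), g x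
      = ∫ t in Set.Icc t₀ t₁, ∫ y in Set.Icc a' b', g (Fin.cons t y) := by
  set e := MeasurableEquiv.piFinSuccAbove (fun _ : Fin (n + 1) => ℝ) 0 with he
  have hmp : MeasurePreserving e volume volume :=
    volume_preserving_piFinSuccAbove (fun _ : Fin (n + 1) => ℝ) 0
  have hsymm : ∀ z : ℝ × (Fin n → ℝ), e.symm z = (Fin.cons z.1 z.2 : Spacetime n) := by
    intro z
    rw [he, MeasurableEquiv.piFinSuccAbove_symm_apply]
    exact Fin.insertNth_zero' z.1 z.2
  have key : Set.Icc (Fin.cons t₀ a' : Spacetime n) (Fin.cons t₁ b')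
      = e ⁻¹' ((Set.Icc t₀ t₁) ×ˢ (Set.Icc a' b')) := by
    ext x
    simp only [Set.mem_preimage, Set.mem_prod, Set.mem_Icc, he,
      MeasurableEquiv.piFinSuccAbove_apply, Pi.le_def]
    constructor
    · rintro ⟨h1, h2⟩
      refine ⟨⟨by simpa using h1 0, by simpa using h2 0⟩, ?_, ?_⟩
      · intro j; simpa [Fin.removeNth, Fin.tail] using h1 j.succ
      · intro j; simpa [Fin.removeNth, Fin.tail] using h2 j.succ
    · rintro ⟨⟨h1, h2⟩, h3, h4⟩
      constructor
      · intro i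
        refine Fin.cases ?_ ?_ i
        · simpa using h1
        · intro j; simpa [Fin.removeNth, Fin.tail] using h3 j
      · intro i
        refine Fin.cases ?_ ?_ i
        · simpa using h2
        · intro j; simpa [Fin.removeNth, Fin.tail] using h4 j
  have hint : IntegrableOn (fun z : ℝ × (Fin n → ℝ) => g (Fin.cons z.1 z.2))
      ((Set.Icc t₀ t₁) ×ˢ (Set.Icc a' b')) := by
    exact ((hg.comp continuous_cons).continuousOn).integrableOn_compact
      (isCompact_Icc.prod isCompact_Icc)
  calc ∫ x in Set.Icc (Fin.cons t₀ a' : Spacetime n) (Fin.cons t₁ b'), g x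
      = ∫ x in e ⁻¹' ((Set.Icc t₀ t₁) ×ˢ (Set.Icc a' b')), (fun z => g (e.symm z)) (e x) := by
        rw [← key]
        refine setIntegral_congr_fun measurableSet_Icc fun x _ => ?_
        simp
    _ = ∫ z in (Set.Icc t₀ t₁) ×ˢ (Set.Icc a' b'), g (e.symm z) :=
        hmp.setIntegral_preimage_emb e.measurableEmbedding (fun z => g (e.symm z)) _
    _ = ∫ z in (Set.Icc t₀ t₁) ×ˢ (Set.Icc a' b'), g (Fin.cons z.1 z.2) := by
        refine setIntegral_congr_fun (measurableSet_Icc.prod measurableSet_Icc) fun z _ => ?_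
        rw [hsymm]
    _ = ∫ t in Set.Icc t₀ t₁, ∫ y in Set.Icc a' b', g (Fin.cons t y) := by
        rw [Measure.volume_eq_prod] at hint ⊢
        exact setIntegral_prod _ hint

end EnergyAux
end S4

section S5
namespace EnergyAux

open Set

variable {n : ℕ}

/-- scalar slice energy density -/
def Eden (φ : Spacetime n → ℝ) (V : ℝ → ℝ) (Vf : Fin (n + 1) → Spacetime n → ℝ)
    (x : Spacetime n) : ℝ := ∑ α, (mdiag α * Vf α x) * Tphi φ V α 0 x

/-- fluid slice energy density -/
def Eflu (ρ : Spacetime n → ℝ) (Vf : Fin (n + 1) → Spacetime n → ℝ)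
    (x : Spacetime n) : ℝ := ρ x * Vf 0 x

/-- deformation source term -/
def F1 (φ : Spacetime n → ℝ) (V : ℝ → ℝ) (Vf : Fin (n + 1) → Spacetime n → ℝ)
    (x : Spacetime n) : ℝ :=
  ∑ α, ∑ β, Tphi φ V α β x * (pd α (fun y => mdiag β * Vf β y) x
    + pd β (fun y => mdiag α * Vf α y) x)

/-- pressure source term -/
def F2 (p : Spacetime n → ℝ) (Vf : Fin (n + 1) → Spacetime n → ℝ)
    (x : Spacetime n) : ℝ := p x * ∑ α, pd α (Vf α) x

end EnergyAux
end S5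


open EnergyAux

/-- Theorem 3.2: energy transport for the scalar field–perfect
fluid system, with the integrated-pressure term:
`E_{t₁}(φ+fluid) = E_{t₀}(φ+fluid) + (1/2)∫∫ T^{αβ}(φ)(∂_αV_β+∂_βV_α) - ∫∫ p ∂_αV^α`. -/
theorem fluid_total_slice_energy_transport (n : ℕ) (hn : 1 ≤ n)
    (φ : Spacetime n → ℝ) (V : ℝ → ℝ)
    (ρ p : Spacetime n → ℝ) (Vf : Fin (n + 1) → Spacetime n → ℝ)
    (hφ : ContDiff ℝ 2 φ) (hV : ContDiff ℝ 1 V)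
    (hρ : ContDiff ℝ 1 ρ) (hp : ContDiff ℝ 1 p) (hVf : ∀ α, ContDiff ℝ 1 (Vf α))
    (hunit : ∀ x : Spacetime n, ∑ α, mdiag α * Vf α x * Vf α x = 1)
    (hcons : ∀ β (x : Spacetime n),
      ∑ α, pd α (fun y => Tphi φ V α β y
        + ((ρ y + p y) * Vf α y * Vf β y - p y * metricUp α β)) x = 0)
    (t₀ t₁ : ℝ) (ht : t₀ ≤ t₁)
    (K : Set (Fin n → ℝ)) (hK : IsCompact K)
    (hsupp : ∀ t ∈ Set.Icc t₀ t₁, ∀ x ∉ K,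
      (∀ α β, Tphi φ V α β (Fin.cons t x) = 0)
        ∧ ρ (Fin.cons t x) = 0 ∧ p (Fin.cons t x) = 0) :
    (∫ x : Fin n → ℝ,
        ∑ α, (mdiag α * Vf α (Fin.cons t₁ x)) * Tphi φ V α 0 (Fin.cons t₁ x))
      + (∫ x : Fin n → ℝ, ρ (Fin.cons t₁ x) * Vf 0 (Fin.cons t₁ x))
    = (∫ x : Fin n → ℝ,
        ∑ α, (mdiag α * Vf α (Fin.cons t₀ x)) * Tphi φ V α 0 (Fin.cons t₀ x))
      + (∫ x : Fin n → ℝ, ρ (Fin.cons t₀ x) * Vf 0 (Fin.cons t₀ x))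
      + (1 / 2) * (∫ t in t₀..t₁, ∫ x : Fin n → ℝ,
          ∑ α, ∑ β, Tphi φ V α β (Fin.cons t x) *
            (pd α (fun y => mdiag β * Vf β y) (Fin.cons t x)
              + pd β (fun y => mdiag α * Vf α y) (Fin.cons t x)))
      - ∫ t in t₀..t₁, ∫ x : Fin n → ℝ,
          p (Fin.cons t x) * ∑ α, pd α (Vf α) (Fin.cons t x) := by
  classical
  show (∫ x : Fin n → ℝ, Eden φ V Vf (Fin.cons t₁ x))
      + (∫ x : Fin n → ℝ, Eflu ρ Vf (Fin.cons t₁ x))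
    = (∫ x : Fin n → ℝ, Eden φ V Vf (Fin.cons t₀ x))
      + (∫ x : Fin n → ℝ, Eflu ρ Vf (Fin.cons t₀ x))
      + (1 / 2) * (∫ t in t₀..t₁, ∫ x : Fin n → ℝ, F1 φ V Vf (Fin.cons t x))
      - ∫ t in t₀..t₁, ∫ x : Fin n → ℝ, F2 p Vf (Fin.cons t x)
  -- the bounding box
  obtain ⟨R0, hR0⟩ := hK.isBounded.subset_closedBall 0
  set R : ℝ := max R0 0 with hRdef
  have hR0' : (0 : ℝ) ≤ R := le_max_right _ _
  have hKR : K ⊆ Metric.closedBall 0 R :=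
    hR0.trans (Metric.closedBall_subset_closedBall (le_max_left _ _))
  have hKnorm : ∀ x ∈ K, ‖x‖ ≤ R := fun x hx => by
    simpa [mem_closedBall_zero_iff] using hKR hx
  set a' : Fin n → ℝ := fun _ => -(R + 1) with ha'
  set b' : Fin n → ℝ := fun _ => R + 1 with hb'
  have hKbox : K ⊆ Set.Icc a' b' := by
    intro x hx
    have hxR : ‖x‖ ≤ R := hKnorm x hx
    constructor <;> intro i <;>
      · have h1 : |x i| ≤ ‖x‖ := by
          simpa [Real.norm_eq_abs] using norm_le_pi_norm x i
        have h2 := abs_le.mp (h1.trans hxR)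
        simp only [ha', hb']
        first
          | linarith [h2.1]
          | linarith [h2.2]
  have hAB : (Fin.cons t₀ a' : Spacetime n) ≤ Fin.cons t₁ b' := by
    intro i
    refine Fin.cases ?_ ?_ i
    · simpa using ht
    · intro j
      simp only [Fin.cons_succ, ha', hb']
      linarith
  -- continuity facts
  have hTc : ∀ α β, Continuous (fun x => Tphi φ V α β x) :=
    fun α β => (contDiff_Tphi hφ hV α β).continuous
  have hPvc : ∀ γ, Continuous (fun x => Pvec φ V ρ p Vf γ x) :=
    fun γ => (contDiff_Pvec hφ hV hρ hp hVf γ).continuous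
  have hGc : Continuous (fun x => ∑ γ, pd γ (fun y => Pvec φ V ρ p Vf γ y) x) :=
    continuous_finset_sum _ fun γ _ => continuous_pd (contDiff_Pvec hφ hV hρ hp hVf γ) γ
  have hF1c : Continuous (fun x => F1 φ V Vf x) := by
    unfold F1
    exact continuous_finset_sum _ fun α _ => continuous_finset_sum _ fun β _ =>
      (hTc α β).mul ((continuous_pd (contDiff_const.mul (hVf β)) α).add
        (continuous_pd (contDiff_const.mul (hVf α)) β))
  have hF2c : Continuous (fun x => F2 p Vf x) :=
    (hp.continuous).mul (continuous_finset_sum _ fun α _ => continuous_pd (hVf α) α)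
  -- vanishing facts
  have hvanP : ∀ t ∈ Set.Icc t₀ t₁, ∀ x ∉ K, ∀ γ,
      Pvec φ V ρ p Vf γ (Fin.cons t x) = 0 := fun t ht' x hx γ =>
    Pvec_vanish (hsupp t ht' x hx).1 (hsupp t ht' x hx).2.1 (hsupp t ht' x hx).2.2 γ
  have hvanF1 : ∀ t ∈ Set.Icc t₀ t₁, ∀ x ∉ K, F1 φ V Vf (Fin.cons t x) = 0 := by
    intro t ht' x hx
    unfold F1
    exact Finset.sum_eq_zero fun α _ => Finset.sum_eq_zero fun β _ => by
      rw [(hsupp t ht' x hx).1 α β, zero_mul]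
  have hvanF2 : ∀ t ∈ Set.Icc t₀ t₁, ∀ x ∉ K, F2 p Vf (Fin.cons t x) = 0 := by
    intro t ht' x hx
    unfold F2
    rw [(hsupp t ht' x hx).2.2, zero_mul]
  -- the divergence theorem on the slab
  have hdiv := MeasureTheory.integral_divergence_of_hasFDerivAt_off_countable'
    (Fin.cons t₀ a') (Fin.cons t₁ b') hAB
    (fun i x => Pvec φ V ρ p Vf i x)
    (fun i x => fderiv ℝ (fun y => Pvec φ V ρ p Vf i y) x)
    ∅ Set.countable_empty
    (fun i => (hPvc i).continuousOn)
    (fun x _ i => ((contDiff_Pvec hφ hV hρ hp hVf i).differentiable one_ne_zero x).hasFDerivAt)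
    ((hGc.continuousOn).integrableOn_compact isCompact_Icc)
  -- boundary faces: i = 0 face data
  have hcompa : (Fin.cons t₀ a' : Spacetime n) ∘ Fin.succ = a' :=
    funext fun j => Fin.cons_succ _ _ _
  have hcompb : (Fin.cons t₁ b' : Spacetime n) ∘ Fin.succ = b' :=
    funext fun j => Fin.cons_succ _ _ _
  have ha1 : ∀ j : Fin n, |a' j| = R + 1 := fun j => by
    simp only [ha']; rw [abs_neg, abs_of_nonneg (by linarith)]
  have hb1 : ∀ j : Fin n, |b' j| = R + 1 := fun j => by
    simp only [hb']; rw [abs_of_nonneg (by linarith)]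
  -- spatial faces vanish
  have hface : ∀ (j : Fin n) (c : ℝ), |c| = R + 1 →
      ∫ x in Set.Icc ((Fin.cons t₀ a' : Spacetime n) ∘ (Fin.succ j).succAbove)
        ((Fin.cons t₁ b' : Spacetime n) ∘ (Fin.succ j).succAbove),
        Pvec φ V ρ p Vf (Fin.succ j) ((Fin.succ j).insertNth c x) = 0 := by
    intro j c hc
    have hzero : ∀ y ∈ Set.Icc ((Fin.cons t₀ a' : Spacetime n) ∘ (Fin.succ j).succAbove)
        ((Fin.cons t₁ b' : Spacetime n) ∘ (Fin.succ j).succAbove),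
        Pvec φ V ρ p Vf (Fin.succ j) ((Fin.succ j).insertNth c y) = 0 := by
      intro y hy
      set z : Spacetime n := (Fin.succ j).insertNth c y with hzdef
      have hi0 : Fin.castSucc (⟨0, hn⟩ : Fin n) = (0 : Fin (n + 1)) := by
        ext; simp
      have h0 : (Fin.succ j).succAbove ⟨0, hn⟩ = 0 := by
        rw [Fin.succAbove_of_castSucc_lt _ _ (by rw [hi0]; exact Fin.succ_pos j), hi0]
      have hz0 : z 0 = y ⟨0, hn⟩ := by
        conv_lhs => rw [hzdef, ← h0]
        exact Fin.insertNth_apply_succAbove (α := fun _ => ℝ) (Fin.succ j) c y ⟨0, hn⟩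
      have hy0 : y ⟨0, hn⟩ ∈ Set.Icc t₀ t₁ := by
        obtain ⟨hy1, hy2⟩ := hy
        constructor
        · have := hy1 ⟨0, hn⟩
          simpa [Function.comp, h0] using this
        · have := hy2 ⟨0, hn⟩
          simpa [Function.comp, h0] using this
      have hzi : z (Fin.succ j) = c := by
        rw [hzdef]; exact Fin.insertNth_apply_same (α := fun _ => ℝ) (Fin.succ j) c y
      have htail : Fin.tail z ∉ K := by
        intro hmem
        have h1 : ‖Fin.tail z‖ ≤ R := hKnorm _ hmem
        have h2 : |Fin.tail z j| ≤ ‖Fin.tail z‖ := by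
          simpa [Real.norm_eq_abs] using norm_le_pi_norm (Fin.tail z) j
        have h3 : Fin.tail z j = c := hzi
        rw [h3, hc] at h2
        linarith
      have hres := hvanP (y ⟨0, hn⟩) hy0 (Fin.tail z) htail (Fin.succ j)
      rwa [← hz0, Fin.cons_self_tail] at hres
    rw [MeasureTheory.setIntegral_congr_fun (g := fun _ => (0 : ℝ)) measurableSet_Icc hzero]
    simp
  -- assemble the boundary identity
  have hmain : ∫ x in Set.Icc (Fin.cons t₀ a' : Spacetime n) (Fin.cons t₁ b'),
      (∑ γ, pd γ (fun y => Pvec φ V ρ p Vf γ y) x)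
      = (∫ y in Set.Icc a' b', Pvec φ V ρ p Vf 0 (Fin.cons t₁ y))
        - ∫ y in Set.Icc a' b', Pvec φ V ρ p Vf 0 (Fin.cons t₀ y) := by
    refine hdiv.trans ?_
    rw [Fin.sum_univ_succ]
    simp only [Fin.succAbove_zero, hcompa, hcompb, Fin.cons_zero, Fin.cons_succ,
      Fin.insertNth_zero']
    rw [add_eq_left]
    refine Finset.sum_eq_zero fun j _ => ?_
    rw [hface j (b' j) (hb1 j), hface j (a' j) (ha1 j), sub_zero]
  -- integrability helpers
  have hIntK : ∀ (g : (Fin n → ℝ) → ℝ), Continuous g → (∀ x ∉ K, g x = 0) → Integrable g :=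
    fun g hg h0 => hg.integrable_of_hasCompactSupport (HasCompactSupport.intro hK h0)
  have hconsCont : ∀ t : ℝ, Continuous (fun y : Fin n → ℝ => (Fin.cons t y : Spacetime n)) :=
    fun t => continuous_cons.comp (Continuous.prodMk_right t)
  have hEdenc : Continuous (fun x => Eden φ V Vf x) := by
    unfold Eden
    exact continuous_finset_sum _ fun α _ =>
      (continuous_const.mul (hVf α).continuous).mul (hTc α 0)
  have hEfluc : Continuous (fun x => Eflu ρ Vf x) := (hρ.continuous).mul (hVf 0).continuous
  -- slice integrals
  have hsl : ∀ t, t ∈ Set.Icc t₀ t₁ →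
      ∫ y in Set.Icc a' b', Pvec φ V ρ p Vf 0 (Fin.cons t y)
        = (∫ x : Fin n → ℝ, Eden φ V Vf (Fin.cons t x))
          + ∫ x : Fin n → ℝ, Eflu ρ Vf (Fin.cons t x) := by
    intro t ht'
    have h1 : ∫ y in Set.Icc a' b', Pvec φ V ρ p Vf 0 (Fin.cons t y)
        = ∫ y : Fin n → ℝ, Pvec φ V ρ p Vf 0 (Fin.cons t y) :=
      MeasureTheory.setIntegral_eq_integral_of_forall_compl_eq_zero fun y hy =>
        hvanP t ht' y (fun hk => hy (hKbox hk)) 0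
    rw [h1]
    have h2 : (fun y : Fin n → ℝ => Pvec φ V ρ p Vf 0 (Fin.cons t y))
        = fun y => Eden φ V Vf (Fin.cons t y) + Eflu ρ Vf (Fin.cons t y) :=
      funext fun y => Pvec_zero hunit (Fin.cons t y)
    rw [h2]
    refine MeasureTheory.integral_add ?_ ?_
    · refine hIntK _ (hEdenc.comp (hconsCont t)) fun x hx => ?_
      show Eden φ V Vf (Fin.cons t x) = 0
      unfold Eden
      exact Finset.sum_eq_zero fun α _ => by rw [(hsupp t ht' x hx).1 α 0, mul_zero]
    · refine hIntK _ (hEfluc.comp (hconsCont t)) fun x hx => ?_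
      show Eflu ρ Vf (Fin.cons t x) = 0
      unfold Eflu
      rw [(hsupp t ht' x hx).2.1, zero_mul]
  -- slab Fubini for the source terms
  have hslabF1 : ∫ t in t₀..t₁, ∫ x : Fin n → ℝ, F1 φ V Vf (Fin.cons t x)
      = ∫ x in Set.Icc (Fin.cons t₀ a' : Spacetime n) (Fin.cons t₁ b'), F1 φ V Vf x := by
    rw [intervalIntegral.integral_of_le ht, ← MeasureTheory.integral_Icc_eq_integral_Ioc,
      slab_integral t₀ t₁ a' b' _ hF1c]
    refine MeasureTheory.setIntegral_congr_fun measurableSet_Icc fun t ht' => ?_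
    exact (MeasureTheory.setIntegral_eq_integral_of_forall_compl_eq_zero fun y hy =>
      hvanF1 t ht' y (fun hk => hy (hKbox hk))).symm
  have hslabF2 : ∫ t in t₀..t₁, ∫ x : Fin n → ℝ, F2 p Vf (Fin.cons t x)
      = ∫ x in Set.Icc (Fin.cons t₀ a' : Spacetime n) (Fin.cons t₁ b'), F2 p Vf x := by
    rw [intervalIntegral.integral_of_le ht, ← MeasureTheory.integral_Icc_eq_integral_Ioc,
      slab_integral t₀ t₁ a' b' _ hF2c]
    refine MeasureTheory.setIntegral_congr_fun measurableSet_Icc fun t ht' => ?_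
    exact (MeasureTheory.setIntegral_eq_integral_of_forall_compl_eq_zero fun y hy =>
      hvanF2 t ht' y (fun hk => hy (hKbox hk))).symm
  -- the divergence integrand in terms of F1 and F2
  have hIF1 : MeasureTheory.IntegrableOn (fun x => F1 φ V Vf x)
      (Set.Icc (Fin.cons t₀ a' : Spacetime n) (Fin.cons t₁ b')) :=
    (hF1c.continuousOn).integrableOn_compact isCompact_Icc
  have hIF2 : MeasureTheory.IntegrableOn (fun x => F2 p Vf x)
      (Set.Icc (Fin.cons t₀ a' : Spacetime n) (Fin.cons t₁ b')) :=
    (hF2c.continuousOn).integrableOn_compact isCompact_Icc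
  have hslabG : ∫ x in Set.Icc (Fin.cons t₀ a' : Spacetime n) (Fin.cons t₁ b'),
      (∑ γ, pd γ (fun y => Pvec φ V ρ p Vf γ y) x)
      = (1 / 2) * (∫ x in Set.Icc (Fin.cons t₀ a' : Spacetime n) (Fin.cons t₁ b'), F1 φ V Vf x)
        - ∫ x in Set.Icc (Fin.cons t₀ a' : Spacetime n) (Fin.cons t₁ b'), F2 p Vf x := by
    calc ∫ x in Set.Icc (Fin.cons t₀ a' : Spacetime n) (Fin.cons t₁ b'),
        (∑ γ, pd γ (fun y => Pvec φ V ρ p Vf γ y) x)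
        = ∫ x in Set.Icc (Fin.cons t₀ a' : Spacetime n) (Fin.cons t₁ b'),
          ((1 / 2) * F1 φ V Vf x - F2 p Vf x) :=
          MeasureTheory.setIntegral_congr_fun measurableSet_Icc fun x _ =>
            div_Pvec hφ hV hρ hp hVf hunit hcons x
      _ = (1 / 2) * (∫ x in Set.Icc (Fin.cons t₀ a' : Spacetime n) (Fin.cons t₁ b'), F1 φ V Vf x)
          - ∫ x in Set.Icc (Fin.cons t₀ a' : Spacetime n) (Fin.cons t₁ b'), F2 p Vf x := by
          rw [MeasureTheory.integral_sub (hIF1.const_mul _) hIF2,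
            MeasureTheory.integral_const_mul]
  -- final assembly
  have hEQ := (hmain.symm.trans hslabG)
  rw [hsl t₁ ⟨ht, le_refl t₁⟩, hsl t₀ ⟨le_refl t₀, ht⟩, ← hslabF1, ← hslabF2] at hEQ
  linarith [hEQ]

end
end
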